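/- arXiv:1510.06390 — 4 statements merged into one kernel-verified Lean document; each statement's English description precedes it below -/
import Mathlib

section
/- Stability estimate: Let w_1,…,w_n be real numbers and z in the upper half plane such that m_fc(z) exists with Im m_fc(z) ≥ c_* > 0 and |m_fc(z)| ≤ 1, and suppose (1/n) ∑_k 1/(w_k − z − m_fc(z)) = m_fc(z) + ε(z) with |ε(z)| ≤ min{c_*³/16, c_*/2}. Then c_*²/16 ≤ |1 − (1/n) ∑_k 1/(w_k − z − m_fc(z))²| ≤ 1 + 1/c_*². -/
/-!
Put `d_k = w_k - z - m` and `v = Im z + Im m ≥ c_*`, so `Im d_k = -v` and `|d_k| ≥ c_*`; the upper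
bound is then the triangle inequality. For the lower bound write `a_k = |d_k|⁻²` and `A` for their
average. Then `Im (1/d_k) = v a_k` and `Re (1/d_k²) = a_k - 2 v² a_k²`, so the hypothesis pins
`v A` to within `min (c_*³/16) (c_*/2)` of `Im m`, while by Cauchy–Schwarz
`Re (1 - avg 1/d_k²) ≥ 1 - A + 2 (v A)²`. Since `v ≥ Im m`, the first gives `A ≤ 1 + c_*²/16`
and `v A ≥ c_*/2`, which makes `1 - A + 2 (v A)²` at least `7 c_*²/16`.
-/

open Finset
open scoped BigOperators

namespace Complex

lemma re_sq_eq_norm_sq_sub (x : ℂ) : (x ^ 2).re = ‖x‖ ^ 2 - 2 * x.im ^ 2 := by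
  rw [sq, mul_re, ← normSq_eq_norm_sq, normSq_apply]
  ring

lemma inv_im_eq_neg_im_mul_norm_inv_sq (d : ℂ) : d⁻¹.im = -d.im * ‖d⁻¹‖ ^ 2 := by
  rw [inv_im, ← normSq_eq_norm_sq, map_inv₀, div_eq_mul_inv]

end Complex

lemma Fintype.one_div_mul_sum_eq_expect {K : Type*} [Semifield K] [CharZero K] {n : ℕ}
    (f : Fin n → K) : 1 / (n : K) * ∑ k, f k = 𝔼 k, f k := by
  rw [Fintype.expect_eq_sum_div_card, Fintype.card_fin, one_div_mul_eq_div]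

lemma Finset.sq_expect_le_expect_sq {ι : Type*} (s : Finset ι) (f : ι → ℝ) :
    (𝔼 i ∈ s, f i) ^ 2 ≤ 𝔼 i ∈ s, f i ^ 2 := by
  rcases s.eq_empty_or_nonempty with rfl | hs
  · simp
  simpa [expect_const hs] using expect_mul_sq_le_sq_mul_sq s f fun _ => (1 : ℝ)

lemma sq_div_sixteen_le_one_sub_add_two_mul_sq {c u v A : ℝ} (hc : 0 < c) (hcu : c ≤ u)
    (huv : u ≤ v) (hA : 0 ≤ A) (hvA : |v * A - u| ≤ min (c ^ 3 / 16) (c / 2)) :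
    c ^ 2 / 16 ≤ 1 - A + 2 * (v * A) ^ 2 := by
  obtain ⟨hlow, hup⟩ := abs_le.1 hvA
  have hvA_upper : v * A ≤ u + c ^ 3 / 16 := by linarith [min_le_left (c ^ 3 / 16) (c / 2)]
  have hvA_lower : c / 2 ≤ v * A := by linarith [min_le_right (c ^ 3 / 16) (c / 2)]
  have hA_le : A ≤ 1 + c ^ 2 / 16 := by
    have : u * A ≤ u * (1 + c ^ 2 / 16) := by
      nlinarith [mul_le_mul_of_nonneg_right huv hA, mul_nonneg (sub_nonneg.2 hcu) (sq_nonneg c)]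
    exact le_of_mul_le_mul_left this (hc.trans_le hcu)
  nlinarith [mul_self_le_mul_self (by positivity : (0 : ℝ) ≤ c / 2) hvA_lower]

section Resolvent

variable {ι : Type*} (s : Finset ι) {d : ι → ℂ} {v : ℝ}

lemma im_expect_inv_of_im_eq (hd : ∀ i, (d i).im = -v) :
    (𝔼 i ∈ s, (d i)⁻¹).im = v * 𝔼 i ∈ s, ‖(d i)⁻¹‖ ^ 2 := by
  simp only [Complex.im_expect, Complex.inv_im_eq_neg_im_mul_norm_inv_sq, hd, neg_neg,
    ← mul_expect]

lemma re_expect_inv_sq_of_im_eq (hd : ∀ i, (d i).im = -v) :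
    (𝔼 i ∈ s, (d i ^ 2)⁻¹).re
      = 𝔼 i ∈ s, ‖(d i)⁻¹‖ ^ 2 - 2 * v ^ 2 * 𝔼 i ∈ s, (‖(d i)⁻¹‖ ^ 2) ^ 2 := by
  have hterm : ∀ i, ((d i ^ 2)⁻¹).re = ‖(d i)⁻¹‖ ^ 2 - 2 * v ^ 2 * (‖(d i)⁻¹‖ ^ 2) ^ 2 := by
    intro i
    rw [← inv_pow, Complex.re_sq_eq_norm_sq_sub, Complex.inv_im_eq_neg_im_mul_norm_inv_sq, hd]
    ring
  simp only [Complex.re_expect, hterm, expect_sub_distrib, ← mul_expect]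

lemma one_sub_add_two_mul_sq_le_re_one_sub_expect_inv_sq (hd : ∀ i, (d i).im = -v) :
    1 - 𝔼 i ∈ s, ‖(d i)⁻¹‖ ^ 2 + 2 * (v * 𝔼 i ∈ s, ‖(d i)⁻¹‖ ^ 2) ^ 2
      ≤ (1 - 𝔼 i ∈ s, (d i ^ 2)⁻¹).re := by
  rw [Complex.sub_re, Complex.one_re, re_expect_inv_sq_of_im_eq s hd]
  nlinarith [sq_expect_le_expect_sq s fun i => ‖(d i)⁻¹‖ ^ 2, sq_nonneg v]

lemma norm_one_sub_expect_inv_sq_le {c : ℝ} (hc : 0 < c) (hd : ∀ i, c ≤ ‖d i‖) :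
    ‖1 - 𝔼 i ∈ s, (d i ^ 2)⁻¹‖ ≤ 1 + 1 / c ^ 2 := by
  have hterm : ∀ i ∈ s, ‖(d i ^ 2)⁻¹‖ ≤ 1 / c ^ 2 := fun i _ => by
    rw [norm_inv, norm_pow, one_div]
    exact inv_anti₀ (by positivity) (pow_le_pow_left₀ hc.le (hd i) 2)
  have hexpect : ‖𝔼 i ∈ s, (d i ^ 2)⁻¹‖ ≤ 1 / c ^ 2 := by
    rcases s.eq_empty_or_nonempty with rfl | hs
    · simp only [expect_empty, norm_zero]; positivity
    exact (RCLike.norm_expect_le (K := ℂ)).trans (expect_le hs hterm)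
  calc ‖1 - 𝔼 i ∈ s, (d i ^ 2)⁻¹‖ ≤ ‖(1 : ℂ)‖ + ‖𝔼 i ∈ s, (d i ^ 2)⁻¹‖ := norm_sub_le _ _
    _ ≤ 1 + 1 / c ^ 2 := by rw [norm_one]; gcongr

end Resolvent

theorem stability_estimate_general (n : ℕ) (w : Fin n → ℝ) (z m : ℂ) (cstar : ℝ)
    (hz : 0 < z.im) (hc : 0 < cstar) (him : cstar ≤ m.im)
    (heps : ‖(1 / (n : ℂ)) * ∑ k : Fin n, ((w k : ℂ) - z - m)⁻¹ - m‖
      ≤ min (cstar ^ 3 / 16) (cstar / 2)) :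
    cstar ^ 2 / 16
        ≤ ‖1 - (1 / (n : ℂ)) * ∑ k : Fin n, (((w k : ℂ) - z - m) ^ 2)⁻¹‖ ∧
      ‖1 - (1 / (n : ℂ)) * ∑ k : Fin n, (((w k : ℂ) - z - m) ^ 2)⁻¹‖
        ≤ 1 + 1 / cstar ^ 2 := by
  set d : Fin n → ℂ := fun k => (w k : ℂ) - z - m
  set v := z.im + m.im
  have hd : ∀ k, (d k).im = -v := fun k => by
    simp only [d, v, Complex.sub_im, Complex.ofReal_im, zero_sub]; ring
  have hcv : cstar ≤ v := by linarith
  simp only [Fintype.one_div_mul_sum_eq_expect] at heps ⊢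
  set A := 𝔼 k, ‖(d k)⁻¹‖ ^ 2
  have hvA : |v * A - m.im| ≤ min (cstar ^ 3 / 16) (cstar / 2) := by
    rw [← im_expect_inv_of_im_eq _ hd, ← Complex.sub_im]
    exact (Complex.abs_im_le_norm _).trans heps
  refine ⟨?_, norm_one_sub_expect_inv_sq_le _ hc fun k => ?_⟩
  · calc cstar ^ 2 / 16 ≤ 1 - A + 2 * (v * A) ^ 2 :=
          sq_div_sixteen_le_one_sub_add_two_mul_sq hc him (by linarith)
            (expect_nonneg fun k _ => by positivity) hvA
      _ ≤ (1 - 𝔼 k, (d k ^ 2)⁻¹).re := one_sub_add_two_mul_sq_le_re_one_sub_expect_inv_sq _ hd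
      _ ≤ ‖1 - 𝔼 k, (d k ^ 2)⁻¹‖ := Complex.re_le_norm _
  · calc cstar ≤ |(d k).im| := by rw [hd, abs_neg, abs_of_pos (by linarith)]; exact hcv
      _ ≤ ‖d k‖ := Complex.abs_im_le_norm _

/-- Stability estimate: if `m` is a complex number with `Im m ≥ c_* > 0` and `|m| ≤ 1`,
`w_1, …, w_n` are reals, `Im z > 0`, and `(1/n) ∑_k 1/(w_k - z - m) = m + ε` with
`|ε| ≤ min (c_*³/16) (c_*/2)`, then
`c_*²/16 ≤ |1 - (1/n) ∑_k 1/(w_k - z - m)²| ≤ 1 + 1/c_*²`. -/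
theorem stability_estimate (n : ℕ) (hn : 0 < n) (w : Fin n → ℝ) (z m : ℂ) (cstar : ℝ)
    (hz : 0 < z.im) (hc : 0 < cstar) (him : cstar ≤ m.im) (habs : ‖m‖ ≤ 1)
    (heps : ‖(1 / (n : ℂ)) * ∑ k : Fin n, ((w k : ℂ) - z - m)⁻¹ - m‖
      ≤ min (cstar ^ 3 / 16) (cstar / 2)) :
    cstar ^ 2 / 16
        ≤ ‖1 - (1 / (n : ℂ)) * ∑ k : Fin n, (((w k : ℂ) - z - m) ^ 2)⁻¹‖ ∧
      ‖1 - (1 / (n : ℂ)) * ∑ k : Fin n, (((w k : ℂ) - z - m) ^ 2)⁻¹‖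
        ≤ 1 + 1 / cstar ^ 2 :=
  stability_estimate_general n w z m cstar hz hc him heps
end

section
/- Gaussian tail bound for ρ_fc: Let m_fc be the Stieltjes transform of the free convolution ρ_fc of the semicircle and standard Gaussian laws, satisfying |m_fc(z)| ≤ 1, and let ρ_fc(E) = lim_{η↓0} π^{-1} Im m_fc(E+iη). Then √(2π) = ∫_ℝ e^{-x²/2} dx / ((x − E − Re m_fc(E))² + π² ρ_fc(E)²) and consequently, for |E| sufficiently large, ρ_fc(E) ≤ e^{-E²/8}. -/
open MeasureTheory Filter Topology Real

/-!
Put `ζ = z + m_fc(z)`. The self-consistent equation says that `m_fc(z)` is the Stieltjes transform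
of the Gaussian density `g` at `ζ`, so taking imaginary parts,
`∫ g(x) / |x - ζ|² dx = Im m_fc(z) / (η + Im m_fc(z)) ≤ 1` for `z = E + iη`. As `η ↓ 0` this
Poisson-type integral would blow up like `1 / Im ζ` if `Im ζ → 0`; hence
`Im m_fc(E) = π ρ_fc(E) > 0`, and dominated convergence gives `∫ g(x) / |x - E - m_fc(E)|² dx = 1`.

For the tail, `|Re m_fc(E)| ≤ 1` keeps the pole at distance `≥ 2` from `|x| < |E| / 2`, where the
integrand is at most `e^{-x²/2} / 4`; elsewhere it is at most `e^{-E²/8}` times a Lorentzian of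
mass `1 / ρ_fc(E)`. Thus `(3/4) √(2π) ≤ e^{-E²/8} / ρ_fc(E)`.
-/

lemma integrable_exp_neg_sq_div_two : Integrable fun x : ℝ => exp (-x ^ 2 / 2) :=
  (integrable_exp_neg_mul_sq (by norm_num : (0 : ℝ) < 1 / 2)).congr
    (ae_of_all _ fun x => by ring_nf)

lemma integral_exp_neg_sq_div_two : ∫ x : ℝ, exp (-x ^ 2 / 2) = √(2 * π) := by
  convert integral_gaussian (1 / 2) using 2 <;> ring_nf

lemma integrable_inv_sub_sq_add_sq (p : ℝ) {c : ℝ} (hc : 0 < c) :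
    Integrable fun x : ℝ => ((x - p) ^ 2 + c ^ 2)⁻¹ := by
  refine ((ProbabilityTheory.integrable_cauchyPDFReal p (γ := c.toNNReal)).const_mul
    (π / c)).congr (ae_of_all _ fun x => ?_)
  simp only [ProbabilityTheory.cauchyPDFReal_def, Real.coe_toNNReal _ hc.le]
  field_simp

lemma integral_inv_sub_sq_add_sq (p : ℝ) {c : ℝ} (hc : 0 < c) :
    ∫ x : ℝ, ((x - p) ^ 2 + c ^ 2)⁻¹ = π / c := by
  have h := ProbabilityTheory.integral_cauchyPDFReal_eq_one p (γ := c.toNNReal) (by simpa using hc)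
  simp only [ProbabilityTheory.cauchyPDFReal_def, Real.coe_toNNReal _ hc.le,
    integral_const_mul] at h
  field_simp at h ⊢
  linarith

lemma continuous_inv_sub_sq_add_sq (p : ℝ) {c : ℝ} (hc : c ≠ 0) :
    Continuous fun x : ℝ => ((x - p) ^ 2 + c ^ 2)⁻¹ :=
  (by fun_prop : Continuous fun x : ℝ => (x - p) ^ 2 + c ^ 2).inv₀ fun x => by positivity

lemma MeasureTheory.Integrable.div_sub_sq_add_sq {g : ℝ → ℝ} (hg : Integrable g) (p : ℝ) {c : ℝ}
    (hc : c ≠ 0) :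
    Integrable fun x => g x / ((x - p) ^ 2 + c ^ 2) := by
  simp_rw [div_eq_mul_inv]
  refine hg.mul_bdd (continuous_inv_sub_sq_add_sq p hc).aestronglyMeasurable
    (c := (c ^ 2)⁻¹) (ae_of_all _ fun x => ?_)
  rw [norm_inv, Real.norm_of_nonneg (by positivity)]
  exact inv_anti₀ (by positivity) (le_add_of_nonneg_left (sq_nonneg _))

lemma im_integral_ofReal_div_sub {g : ℝ → ℝ} (hg : Integrable g) {ζ : ℂ} (hζ : 0 < ζ.im) :
    (∫ x : ℝ, (g x : ℂ) / (x - ζ)).im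
      = ζ.im * ∫ x : ℝ, g x / ((x - ζ.re) ^ 2 + ζ.im ^ 2) := by
  have hne : ∀ x : ℝ, (x - ζ : ℂ) ≠ 0 := fun x h => by
    simpa [hζ.ne'] using congrArg Complex.im h
  have hint : Integrable fun x : ℝ => (g x : ℂ) / (x - ζ) := by
    simp_rw [div_eq_mul_inv]
    refine hg.ofReal.mul_bdd
      ((by fun_prop : Continuous fun x : ℝ => (x - ζ : ℂ)).inv₀ hne).aestronglyMeasurable
      (c := ζ.im⁻¹) (ae_of_all _ fun x => ?_)
    rw [norm_inv]
    refine inv_anti₀ hζ ((le_abs_self _).trans ?_)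
    simpa using Complex.abs_im_le_norm (x - ζ : ℂ)
  rw [← Complex.imCLM_apply, ← ContinuousLinearMap.integral_comp_comm _ hint,
    ← integral_const_mul]
  refine integral_congr_ae (ae_of_all _ fun x => ?_)
  simp [Complex.div_im, Complex.normSq_apply]
  ring

lemma div_le_integral_div_sub_sq_add_sq {g : ℝ → ℝ} (hg : Integrable g) (hg0 : 0 ≤ g)
    {p c m : ℝ} (hc : 0 < c) (hm : ∀ x ∈ Set.Icc (p - c) (p + c), m ≤ g x) :
    m / c ≤ ∫ x, g x / ((x - p) ^ 2 + c ^ 2) := by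
  have hint := hg.div_sub_sq_add_sq p hc.ne'
  calc m / c = ∫ _ in Set.Icc (p - c) (p + c), m / (2 * c ^ 2) := by
        rw [setIntegral_const, Real.volume_real_Icc_of_le (by linarith), smul_eq_mul]
        field_simp
        ring
    _ ≤ ∫ x in Set.Icc (p - c) (p + c), g x / ((x - p) ^ 2 + c ^ 2) := by
        refine setIntegral_mono_on (integrableOn_const (by simp)) hint.integrableOn
          measurableSet_Icc fun x hx => div_le_div₀ (hg0 x) (hm x hx) (by positivity) ?_
        have : (x - p) ^ 2 ≤ c ^ 2 := sq_le_sq' (by linarith [hx.1]) (by linarith [hx.2])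
        linarith
    _ ≤ ∫ x, g x / ((x - p) ^ 2 + c ^ 2) :=
        setIntegral_le_integral hint (ae_of_all _ fun x => div_nonneg (hg0 x) (by positivity))

lemma tendsto_integral_div_sub_sq_add_sq_atTop {α : Type*} {l : Filter α} {g : ℝ → ℝ}
    (hg : Integrable g) (hg0 : 0 ≤ g) {p₀ : ℝ} (hgc : ContinuousAt g p₀) (hgp : 0 < g p₀)
    {p c : α → ℝ} (hp : Tendsto p l (𝓝 p₀)) (hc : Tendsto c l (𝓝[>] 0)) :
    Tendsto (fun i => ∫ x, g x / ((x - p i) ^ 2 + c i ^ 2)) l atTop := by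
  obtain ⟨δ, hδ, hgδ⟩ := Metric.eventually_nhds_iff.1
    (hgc.eventually (eventually_ge_nhds (half_lt_self hgp)))
  have hlow : ∀ᶠ i in l, g p₀ / 2 / c i ≤ ∫ x, g x / ((x - p i) ^ 2 + c i ^ 2) := by
    filter_upwards [hp (Metric.ball_mem_nhds p₀ (half_pos hδ)),
      hc (Ioo_mem_nhdsGT (half_pos hδ))] with i hpi hci
    refine div_le_integral_div_sub_sq_add_sq hg hg0 hci.1 fun x hx => hgδ ?_
    rw [Set.mem_preimage, Metric.mem_ball, Real.dist_eq] at hpi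
    rw [Real.dist_eq, abs_lt] at *
    constructor <;> linarith [hx.1, hx.2, hci.2, hpi.1, hpi.2]
  refine tendsto_atTop_mono' l hlow ?_
  simpa only [div_eq_mul_inv, Function.comp_def] using
    (tendsto_inv_nhdsGT_zero.comp hc).const_mul_atTop (half_pos hgp)

lemma tendsto_integral_div_sub_sq_add_sq {α : Type*} {l : Filter α} [l.IsCountablyGenerated]
    {g : ℝ → ℝ} (hg : Integrable g) {p c : α → ℝ} {p₀ c₀ : ℝ} (hp : Tendsto p l (𝓝 p₀))
    (hc : Tendsto c l (𝓝 c₀)) (hc₀ : c₀ ≠ 0) :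
    Tendsto (fun i => ∫ x, g x / ((x - p i) ^ 2 + c i ^ 2)) l
      (𝓝 (∫ x, g x / ((x - p₀) ^ 2 + c₀ ^ 2))) := by
  have hc₀2 : 0 < c₀ ^ 2 / 2 := by positivity
  have hc2 : ∀ᶠ i in l, c₀ ^ 2 / 2 < c i ^ 2 :=
    (hc.pow 2).eventually (eventually_gt_nhds (by linarith))
  refine tendsto_integral_filter_of_dominated_convergence (fun x => ‖g x‖ / (c₀ ^ 2 / 2))
    ?_ ?_ (hg.norm.div_const _) (ae_of_all _ fun x => ?_)
  · filter_upwards [hc2] with i hi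
    refine (hg.div_sub_sq_add_sq (p i) fun h => ?_).aestronglyMeasurable
    rw [h] at hi
    linarith
  · filter_upwards [hc2] with i hi
    refine ae_of_all _ fun x => ?_
    rw [norm_div, Real.norm_of_nonneg (by positivity : 0 ≤ (x - p i) ^ 2 + c i ^ 2)]
    exact div_le_div_of_nonneg_left (norm_nonneg _) hc₀2 (by nlinarith [sq_nonneg (x - p i)])
  · exact tendsto_const_nhds.div (((tendsto_const_nhds.sub hp).pow 2).add (hc.pow 2))
      (by positivity)

section SelfConsistent

variable {g : ℝ → ℝ} {m : ℂ → ℂ}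

lemma integral_div_sub_sq_add_sq_eq_im_div_im (hg : Integrable g) {z : ℂ}
    (hz : 0 < z.im) (hfix : m z = ∫ x : ℝ, (g x : ℂ) / (x - z - m z)) (him : 0 ≤ (m z).im) :
    ∫ x, g x / ((x - (z + m z).re) ^ 2 + (z + m z).im ^ 2) = (m z).im / (z + m z).im := by
  have hζ : 0 < (z + m z).im := by rw [Complex.add_im]; linarith
  have h := congrArg Complex.im hfix
  simp_rw [sub_sub] at h
  rw [im_integral_ofReal_div_sub hg hζ] at h
  rw [h, mul_div_cancel_left₀ _ hζ.ne']

theorem im_pos_and_integral_div_sub_sq_add_sq_eq_one (hg : Integrable g) (hgc : Continuous g)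
    (hgpos : ∀ x, 0 < g x)
    (hfix : ∀ z : ℂ, 0 < z.im → m z = ∫ x : ℝ, (g x : ℂ) / (x - z - m z))
    (him : ∀ z : ℂ, 0 < z.im → 0 ≤ (m z).im) {E : ℝ}
    (hcont : Tendsto (fun η : ℝ => m (E + η * Complex.I)) (𝓝[>] 0) (𝓝 (m E))) :
    0 < (m E).im ∧ ∫ x, g x / ((x - (E + (m E).re)) ^ 2 + (m E).im ^ 2) = 1 := by
  set z : ℝ → ℂ := fun η => E + η * Complex.I
  set ζ : ℝ → ℂ := fun η => z η + m (z η)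
  have hz_im : ∀ η, (z η).im = η := fun η => by simp [z]
  have hpos : ∀ᶠ η in 𝓝[>] (0 : ℝ), 0 < (z η).im := by
    filter_upwards [self_mem_nhdsWithin] with η hη
    rwa [hz_im]
  have hζ : Tendsto ζ (𝓝[>] 0) (𝓝 (E + m E)) := by
    refine Tendsto.add ?_ hcont
    have hzc : Continuous z := by fun_prop
    simpa [z] using (hzc.tendsto 0).mono_left nhdsWithin_le_nhds
  have hre : Tendsto (fun η => (ζ η).re) (𝓝[>] 0) (𝓝 (E + (m E).re)) := by
    simpa [Function.comp_def] using (Complex.continuous_re.tendsto _).comp hζ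
  have hζim : Tendsto (fun η => (ζ η).im) (𝓝[>] 0) (𝓝 (m E).im) := by
    simpa [Function.comp_def] using (Complex.continuous_im.tendsto _).comp hζ
  have hmim : Tendsto (fun η => (m (z η)).im) (𝓝[>] 0) (𝓝 (m E).im) :=
    (Complex.continuous_im.tendsto _).comp hcont
  have hP : ∀ᶠ η in 𝓝[>] (0 : ℝ), ∫ x, g x / ((x - (ζ η).re) ^ 2 + (ζ η).im ^ 2)
      = (m (z η)).im / (ζ η).im := by
    filter_upwards [hpos] with η hη
    exact integral_div_sub_sq_add_sq_eq_im_div_im hg hη (hfix _ hη) (him _ hη)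
  have hζpos : ∀ᶠ η in 𝓝[>] (0 : ℝ), 0 < (ζ η).im := by
    filter_upwards [hpos] with η hη
    simpa [ζ] using add_pos_of_pos_of_nonneg hη (him _ hη)
  have hE : 0 < (m E).im := by
    refine (ge_of_tendsto hmim (hpos.mono fun η hη => him _ hη)).lt_of_ne fun h => ?_
    have hζ0 : Tendsto (fun η => (ζ η).im) (𝓝[>] 0) (𝓝[>] 0) :=
      tendsto_nhdsWithin_iff.2 ⟨h ▸ hζim, hζpos⟩
    have hP_le : ∀ᶠ η in 𝓝[>] (0 : ℝ),
        ∫ x, g x / ((x - (ζ η).re) ^ 2 + (ζ η).im ^ 2) ≤ 1 := by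
      filter_upwards [hP, hpos, hζpos] with η hPη hη hζη
      rw [hPη, div_le_one hζη]
      simp [ζ]
      linarith
    have hP_top := tendsto_integral_div_sub_sq_add_sq_atTop hg (fun x => (hgpos x).le)
      hgc.continuousAt (hgpos _) hre hζ0
    obtain ⟨η, hη1, hη2⟩ := (hP_top.eventually_gt_atTop 1 |>.and hP_le).exists
    linarith
  refine ⟨hE, tendsto_nhds_unique (tendsto_integral_div_sub_sq_add_sq hg hre hζim hE.ne') ?_⟩
  refine Tendsto.congr' (EventuallyEq.symm hP) ?_
  have h := hmim.div hζim hE.ne'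
  rwa [div_self hE.ne'] at h

end SelfConsistent

lemma integral_exp_neg_sq_div_two_div_le {p c s : ℝ} (hc : 0 < c) (hs : 0 ≤ s)
    (hsep : ∀ x, |x| < s → 4 ≤ (x - p) ^ 2) :
    ∫ x, exp (-x ^ 2 / 2) / ((x - p) ^ 2 + c ^ 2)
      ≤ √(2 * π) / 4 + exp (-s ^ 2 / 2) * (π / c) := by
  have hbound : ∀ x, exp (-x ^ 2 / 2) / ((x - p) ^ 2 + c ^ 2)
      ≤ exp (-x ^ 2 / 2) / 4 + exp (-s ^ 2 / 2) * ((x - p) ^ 2 + c ^ 2)⁻¹ := by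
    intro x
    rcases lt_or_ge |x| s with hx | hx
    · have : 0 ≤ exp (-s ^ 2 / 2) * ((x - p) ^ 2 + c ^ 2)⁻¹ := by positivity
      have := div_le_div_of_nonneg_left (exp_pos (-x ^ 2 / 2)).le (by norm_num)
        (by nlinarith [hsep x hx] : 4 ≤ (x - p) ^ 2 + c ^ 2)
      linarith
    · have hexp : exp (-x ^ 2 / 2) ≤ exp (-s ^ 2 / 2) :=
        exp_le_exp.2 (by nlinarith [sq_abs x])
      rw [div_eq_mul_inv]
      exact (mul_le_mul_of_nonneg_right hexp (by positivity)).trans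
        (le_add_of_nonneg_left (by positivity))
  calc ∫ x, exp (-x ^ 2 / 2) / ((x - p) ^ 2 + c ^ 2)
      ≤ ∫ x, (exp (-x ^ 2 / 2) / 4 + exp (-s ^ 2 / 2) * ((x - p) ^ 2 + c ^ 2)⁻¹) :=
        integral_mono (integrable_exp_neg_sq_div_two.div_sub_sq_add_sq p hc.ne')
          ((integrable_exp_neg_sq_div_two.div_const 4).add
            ((integrable_inv_sub_sq_add_sq p hc).const_mul _)) hbound
    _ = √(2 * π) / 4 + exp (-s ^ 2 / 2) * (π / c) := by
        rw [integral_add (integrable_exp_neg_sq_div_two.div_const 4)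
            ((integrable_inv_sub_sq_add_sq p hc).const_mul _), integral_div, integral_const_mul,
          integral_exp_neg_sq_div_two, integral_inv_sub_sq_add_sq p hc]

lemma le_pi_mul_exp_neg_sq_div_eight_of_integral_eq {E a c : ℝ} (hE : 6 ≤ |E|) (ha : |a| ≤ 1)
    (hc : 0 < c) (h : ∫ x, exp (-x ^ 2 / 2) / ((x - (E + a)) ^ 2 + c ^ 2) = √(2 * π)) :
    c ≤ π * exp (-E ^ 2 / 8) := by
  have hsep (x : ℝ) (hx : |x| < |E| / 2) : 4 ≤ (x - (E + a)) ^ 2 := by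
    have hdist : |E| ≤ |x - (E + a)| + |x| + |a| :=
      calc |E| = |(E + a - x) + x + -a| := by ring_nf
        _ ≤ _ := abs_add_three _ _ _
        _ = _ := by rw [abs_neg, abs_sub_comm]
    nlinarith [sq_abs (x - (E + a))]
  have hle := h ▸ integral_exp_neg_sq_div_two_div_le hc (by positivity) hsep
  rw [div_pow, sq_abs, show -(E ^ 2 / 2 ^ 2) / 2 = -E ^ 2 / 8 by ring] at hle
  have hsqrt : 4 / 3 ≤ √(2 * π) := Real.le_sqrt_of_sq_le (by nlinarith [pi_gt_three])
  have : 1 ≤ π * exp (-E ^ 2 / 8) / c := by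
    rw [mul_comm, mul_div_assoc]
    linarith
  rwa [one_le_div hc] at this

/-- Gaussian tail bound for the free convolution density: if `m_fc` solves the
self-consistent equation on the upper half plane with `Im m_fc ≥ 0` and `|m_fc| ≤ 1`,
extends continuously to the real axis, and `ρ_fc(E) = lim_{η↓0} π⁻¹ Im m_fc(E+iη)`, then
`√(2π) = ∫ e^{-x²/2} dx / ((x - E - Re m_fc(E))² + π² ρ_fc(E)²)` and consequently
`ρ_fc(E) ≤ e^{-E²/8}` for `|E|` sufficiently large. -/
theorem rho_fc_gaussian_tail (mfc : ℂ → ℂ) (ρfc : ℝ → ℝ)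
    (hfix : ∀ z : ℂ, 0 < z.im →
      mfc z = ∫ x : ℝ,
        (((Real.sqrt (2 * Real.pi))⁻¹ * Real.exp (-x ^ 2 / 2) : ℝ) : ℂ) / ((x : ℂ) - z - mfc z))
    (him : ∀ z : ℂ, 0 < z.im → 0 ≤ (mfc z).im)
    (habs : ∀ z : ℂ, 0 < z.im → ‖mfc z‖ ≤ 1)
    (hcont : ∀ E : ℝ, Filter.Tendsto (fun η : ℝ => mfc ((E : ℂ) + η * Complex.I))
      (nhdsWithin 0 (Set.Ioi 0)) (nhds (mfc (E : ℂ))))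
    (hρ : ∀ E : ℝ, Filter.Tendsto
      (fun η : ℝ => Real.pi⁻¹ * (mfc ((E : ℂ) + η * Complex.I)).im)
      (nhdsWithin 0 (Set.Ioi 0)) (nhds (ρfc E))) :
    (∀ E : ℝ, Real.sqrt (2 * Real.pi)
        = ∫ x : ℝ, Real.exp (-x ^ 2 / 2)
            / ((x - E - (mfc (E : ℂ)).re) ^ 2 + Real.pi ^ 2 * ρfc E ^ 2)) ∧
      ∃ C : ℝ, ∀ E : ℝ, C ≤ |E| → ρfc E ≤ Real.exp (-E ^ 2 / 8) := by
  have hg : Integrable fun x : ℝ => (√(2 * π))⁻¹ * exp (-x ^ 2 / 2) :=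
    integrable_exp_neg_sq_div_two.const_mul _
  have hboundary E := im_pos_and_integral_div_sub_sq_add_sq_eq_one hg (by fun_prop)
    (fun x => by positivity) hfix him (hcont E)
  have hρ_eq E : π * ρfc E = (mfc E).im := by
    have hlim := ((Complex.continuous_im.tendsto _).comp (hcont E)).const_mul π⁻¹
    rw [tendsto_nhds_unique (hρ E) hlim, mul_inv_cancel_left₀ pi_ne_zero]
  have hidentity (E : ℝ) : √(2 * π)
      = ∫ x, exp (-x ^ 2 / 2) / ((x - E - (mfc E).re) ^ 2 + π ^ 2 * ρfc E ^ 2) := by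
    have hsqrt : √(2 * π) ≠ 0 := by positivity
    calc √(2 * π) = √(2 * π) * ∫ x, (√(2 * π))⁻¹ * exp (-x ^ 2 / 2)
          / ((x - (E + (mfc E).re)) ^ 2 + (mfc E).im ^ 2) := by rw [(hboundary E).2, mul_one]
      _ = _ := by
        rw [← integral_const_mul, ← hρ_eq]
        congr 1 with x
        field_simp
        ring
  refine ⟨hidentity, 6, fun E hE => ?_⟩
  have hre : |(mfc E).re| ≤ 1 := (Complex.abs_re_le_norm _).trans <|
    le_of_tendsto ((continuous_norm.tendsto _).comp (hcont E)) <| by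
      filter_upwards [self_mem_nhdsWithin] with η hη
      exact habs _ (by simpa using hη)
  have hc : 0 < π * ρfc E := (hρ_eq E).symm ▸ (hboundary E).1
  refine le_of_mul_le_mul_left (le_pi_mul_exp_neg_sq_div_eight_of_integral_eq hE hre hc ?_) pi_pos
  rw [hidentity E]
  congr 1 with x
  ring
end

section
/- Tree bound for resolvent sums (single tree, no marked vertex): Let T be a tree on vertices {1,…,m} and suppose G is an n×n complex matrix such that |G_{ab}| ≤ C for all a,b and moreover (1/n)∑_b |G_{ab}|² ≤ C/(nη) for all a (a Ward-type bound with parameter η > 0 and C ≥ 1). Then (1/n^m) ∑_{i_1,…,i_m = 1}^{n} ∏_{(a,b) ∈ E(T)} |G_{i_a i_b}| ≤ C^{2(m-1)} (nη)^{-(m-1)/2}. -/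
/-!
Peel off a leaf `v` of the tree, with neighbour `u`. Summing over the index `i v` first, only the
factor `|A (i v) (i u)|` depends on it, and by Cauchy–Schwarz and the Ward bound its row sum is at
most `n √(C/(nη))`; what remains is the same sum over the tree with `v` removed. By induction the
sum is at most `n (n √(C/(nη)))^(m-1)`, i.e. its average is `(C/(nη))^((m-1)/2)`, and
`C^(1/2) ≤ C^2` as `C ≥ 1`.
-/

open Finset

namespace SimpleGraph

variable {V : Type*} [Fintype V] [DecidableEq V] {T : SimpleGraph V} [DecidableRel T.Adj]

lemma prod_edgeFinset_eq_mul_prod_induce_compl {M : Type*} [CommMonoid M] {u v : V}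
    (hv : ∀ z, T.Adj v z ↔ z = u) (w : Sym2 V → M) :
    ∏ e ∈ T.edgeFinset, w e = w s(v, u) * ∏ e ∈ (T.induce {v}ᶜ).edgeFinset, w (e.map (↑)) := by
  have hvu : s(v, u) ∈ T.edgeFinset := by simp [hv]
  have hrest : (T.induce {v}ᶜ).edgeFinset.map (Function.Embedding.subtype _).sym2Map =
      T.edgeFinset.erase s(v, u) := by
    rw [map_edgeFinset_induce]
    ext e
    induction e with
    | _ a b =>
      simp only [mem_inter, mem_sym2_iff, mem_erase, mem_edgeFinset, mem_edgeSet, Sym2.mem_iff,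
        forall_eq_or_imp, forall_eq, Set.mem_toFinset, Set.mem_compl_singleton_iff, ne_eq,
        Sym2.eq_iff]
      grind [T.adj_comm]
  rw [← mul_prod_erase _ _ hvu, ← hrest, prod_map]
  rfl

theorem IsTree.sum_prod_edgeFinset_le {ι : Type*} [Fintype ι] (hT : T.IsTree)
    {g : Sym2 ι → ℝ} (hg : ∀ e, 0 ≤ g e) {K : ℝ} (hK : 0 ≤ K) (hrow : ∀ a, ∑ b, g s(a, b) ≤ K) :
    ∑ i : V → ι, ∏ e ∈ T.edgeFinset, g (e.map i) ≤ Fintype.card ι * K ^ (Fintype.card V - 1) := by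
  induction hN : Fintype.card V generalizing V with
  | zero => exact absurd hN (have := hT.nonempty; Fintype.card_ne_zero)
  | succ n ih =>
    rcases subsingleton_or_nontrivial V with hV | hV
    · have hn : n = 0 := by
        have := Fintype.card_le_one_iff_subsingleton.mpr hV
        omega
      rw [edgeFinset_eq_empty.mpr (Subsingleton.elim _ _)]
      simp [hN, hn]
    · obtain ⟨v, hv⟩ := hT.exists_vert_degree_one_of_nontrivial
      obtain ⟨u, hvu, hu⟩ := degree_eq_one_iff_existsUnique_adj.mp hv
      have hv' : ∀ z, T.Adj v z ↔ z = u := fun z => ⟨hu z, fun h => h ▸ hvu⟩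
      set T' := T.induce {v}ᶜ
      have hT' : T'.IsTree :=
        ⟨hT.connected.induce_compl_singleton_of_degree_eq_one hv, hT.isAcyclic.induce _⟩
      have hcard : Fintype.card ({v}ᶜ : Set V) = n := by
        rw [Fintype.card_compl_set, hN]; simp
      have hpred : n + 1 - 1 = n - 1 + 1 := by
        have := Fintype.one_lt_card_iff_nontrivial.mpr hV
        omega
      set u' : ({v}ᶜ : Set V) := ⟨u, hvu.ne'⟩
      set P : (({v}ᶜ : Set V) → ι) → ℝ := fun j => ∏ e ∈ T'.edgeFinset, g (e.map j)
      calc ∑ i : V → ι, ∏ e ∈ T.edgeFinset, g (e.map i)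
          = ∑ i : V → ι, g s(i v, i u) * P (fun w => i w) := by
            refine sum_congr rfl fun i _ => ?_
            rw [prod_edgeFinset_eq_mul_prod_induce_compl hv' (fun e => g (e.map i))]
            simp only [Sym2.map_mk, Sym2.map_map]
            rfl
        _ = ∑ p : ι × (({v}ᶜ : Set V) → ι), g s(p.1, p.2 u') * P p.2 :=
            Fintype.sum_equiv (Equiv.funSplitAt v ι) _ _ fun i => rfl
        _ = ∑ j, (∑ b, g s(b, j u')) * P j := by
            rw [Fintype.sum_prod_type_right]
            simp_rw [sum_mul]
        _ ≤ ∑ j, K * P j := by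
            gcongr with j
            · exact prod_nonneg fun e _ => hg _
            · simpa only [Sym2.eq_swap] using hrow (j u')
        _ = K * ∑ j, P j := (mul_sum _ _ _).symm
        _ ≤ K * (Fintype.card ι * K ^ (n - 1)) := by gcongr; exact ih hT' hcard
        _ = Fintype.card ι * K ^ (n + 1 - 1) := by rw [hpred, pow_succ]; ring

end SimpleGraph

lemma sqrt_div_pow_le {C x : ℝ} (hC : 1 ≤ C) (hx : 0 < x) (k : ℕ) :
    √(C / x) ^ k ≤ C ^ (2 * k) * x ^ (-((k : ℝ) / 2)) := by
  have hsqrtC : √C ≤ C ^ 2 :=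
    (Real.sqrt_le_self_iff.mpr (.inr hC)).trans (le_self_pow₀ hC two_ne_zero)
  calc √(C / x) ^ k = √C ^ k * (√x ^ k)⁻¹ := by
        rw [Real.sqrt_div' _ hx.le, div_pow, div_eq_mul_inv]
    _ ≤ C ^ (2 * k) * (√x ^ k)⁻¹ := by rw [pow_mul]; gcongr
    _ = C ^ (2 * k) * x ^ (-((k : ℝ) / 2)) := by
        rw [Real.rpow_neg hx.le, Real.sqrt_eq_rpow, ← Real.rpow_natCast (x ^ _) k,
          ← Real.rpow_mul hx.le]
        ring_nf

theorem tree_resolvent_bound_general (m n : ℕ) (T : SimpleGraph (Fin m)) [DecidableRel T.Adj]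
    (hT : T.IsTree) (η C : ℝ) (hη : 0 < η) (hC : 1 ≤ C) (hn : 0 < n)
    (A : Matrix (Fin n) (Fin n) ℂ)
    (hsym : ∀ a b, ‖A a b‖ = ‖A b a‖)
    (hward : ∀ a : Fin n, (1 / (n : ℝ)) * ∑ b, ‖A a b‖ ^ 2 ≤ C / (n * η)) :
    (1 / (n : ℝ) ^ m) * ∑ i : Fin m → Fin n, ∏ e ∈ T.edgeFinset,
        Sym2.lift ⟨fun a b => ‖A (i a) (i b)‖, fun a b => hsym (i a) (i b)⟩ e
      ≤ C ^ (2 * (m - 1)) * ((n : ℝ) * η) ^ (-(((m : ℝ) - 1) / 2)) := by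
  have hn' : (0 : ℝ) < n := Nat.cast_pos.mpr hn
  obtain ⟨k, rfl⟩ := Nat.exists_eq_add_one_of_ne_zero (Fin.pos_iff_nonempty.mpr hT.nonempty).ne'
  set δ := √(C / (n * η))
  have hrow (a : Fin n) : ∑ b, ‖A a b‖ ≤ n * δ :=
    calc ∑ b, ‖A a b‖ ≤ √(n * ∑ b, ‖A a b‖ ^ 2) :=
          Real.le_sqrt_of_sq_le (by
            simpa using sq_sum_le_card_mul_sum_sq (s := Finset.univ) (f := fun b => ‖A a b‖))
      _ ≤ √(n * (n * (C / (n * η)))) := by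
          gcongr
          rw [← div_le_iff₀' hn', ← one_div_mul_eq_div]
          exact hward a
      _ = n * δ := by rw [← mul_assoc, Real.sqrt_mul (by positivity), Real.sqrt_mul_self hn'.le]
  have htree := hT.sum_prod_edgeFinset_le (g := Sym2.lift ⟨fun a b => ‖A a b‖, hsym⟩)
    (Sym2.ind fun a b => norm_nonneg (A a b)) (by positivity) hrow
  calc _ ≤ 1 / (n : ℝ) ^ (k + 1) * (n * (n * δ) ^ k) := by
        gcongr
        simpa only [Sym2.lift_map_apply, Fintype.card_fin, Nat.add_sub_cancel] using htree
    _ = δ ^ k := by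
        field_simp
        ring
    _ ≤ _ := by
        push_cast
        rw [add_sub_cancel_right]
        exact sqrt_div_pow_le hC (by positivity) k

/-- Tree bound for resolvent sums: if `T` is a tree on `m` vertices and `A` is an `n×n`
complex matrix with symmetric absolute values, entries bounded by `C ≥ 1`, and satisfying
the Ward-type bound `(1/n) ∑_b |A_{ab}|² ≤ C/(nη)`, then
`(1/n^m) ∑_{i₁,…,i_m} ∏_{(a,b) ∈ E(T)} |A_{i_a i_b}| ≤ C^{2(m-1)} (nη)^{-(m-1)/2}`. -/
theorem tree_resolvent_bound (m n : ℕ) (T : SimpleGraph (Fin m)) [DecidableRel T.Adj]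
    (hT : T.IsTree) (η C : ℝ) (hη : 0 < η) (hC : 1 ≤ C) (hn : 0 < n)
    (A : Matrix (Fin n) (Fin n) ℂ)
    (hsym : ∀ a b, ‖A a b‖ = ‖A b a‖)
    (hbd : ∀ a b, ‖A a b‖ ≤ C)
    (hward : ∀ a : Fin n, (1 / (n : ℝ)) * ∑ b, ‖A a b‖ ^ 2 ≤ C / (n * η)) :
    (1 / (n : ℝ) ^ m) * ∑ i : Fin m → Fin n, ∏ e ∈ T.edgeFinset,
        Sym2.lift ⟨fun a b => ‖A (i a) (i b)‖, fun a b => hsym (i a) (i b)⟩ e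
      ≤ C ^ (2 * (m - 1)) * ((n : ℝ) * η) ^ (-(((m : ℝ) - 1) / 2)) :=
  tree_resolvent_bound_general m n T hT η C hη hC hn A hsym hward
end

section
/- Graph bound for resolvent sums: Let 𝒢 be a connected graph on m vertices with E edges (multi-edges and loops allowed), and G an n×n complex matrix with |G_{ab}| ≤ C (C ≥ 1) and (1/n)∑_b |G_{ab}|² ≤ C/(nη) for all a, for some η > 0. Then (1/n^m) ∑_{i_1,…,i_m=1}^n ∏_{(a,b)∈𝒢} |G_{i_a i_b}| ≤ C^{E+m-1} (nη)^{-(m-1)/2}. -/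
/-!
Root the graph at a vertex `r` and give every other vertex `v` a neighbour `p v` strictly closer
to `r`; the edges `{v, p v}` are distinct and form a spanning tree. All other edges are bounded
by `C`. In the remaining tree product, sum out the vertices in order of decreasing distance to
`r`: each is a leaf when its turn comes, and its sum is a column sum
`∑ₓ |A_{x, i_{p v}}| ≤ n √(C/(nη))` by Cauchy–Schwarz and the Ward bound. The root contributes `n`.
-/

open Finset Function

section LeafRemoval

variable {V ι : Type*} [Fintype V] [DecidableEq V] [Fintype ι]

theorem sum_update_swap {M : Type*} [AddCommMonoid M] (a : V) (H : (V → ι) → ι → M) :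
    ∑ q : (V → ι) × ι, H (update q.1 a q.2) (q.1 a) = ∑ q : (V → ι) × ι, H q.1 q.2 :=
  Fintype.sum_equiv (Involutive.toPerm (fun q => (update q.1 a q.2, q.1 a)) fun q => by simp)
    _ _ fun _ => rfl

theorem sum_mul_le_of_update_eq {w : ι → ι → ℝ} {D : ℝ}
    (hcol : ∀ y, ∑ x, w x y ≤ Fintype.card ι * D) {F : (V → ι) → ℝ} (hF0 : ∀ i, 0 ≤ F i)
    {a b : V} (hF : ∀ i x, F (update i a x) = F i) (hba : b ≠ a) :
    ∑ i, F i * w (i a) (i b) ≤ D * ∑ i, F i := by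
  rcases isEmpty_or_nonempty ι with hι | hι
  · have : IsEmpty (V → ι) := ⟨fun i => hι.false (i a)⟩
    simp
  refine le_of_mul_le_mul_left ?_ (Nat.cast_pos.2 Fintype.card_pos : (0 : ℝ) < Fintype.card ι)
  calc (Fintype.card ι : ℝ) * ∑ i, F i * w (i a) (i b)
      = ∑ q : (V → ι) × ι, F (update q.1 a q.2) * w (q.1 a) (update q.1 a q.2 b) := by
        simp [Fintype.sum_prod_type, hF, update_of_ne hba, mul_sum]
    _ = ∑ q : (V → ι) × ι, F q.1 * w q.2 (q.1 b) := sum_update_swap a fun j x => F j * w x (j b)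
    _ = ∑ j, F j * ∑ x, w x (j b) := by simp only [Fintype.sum_prod_type, mul_sum]
    _ ≤ ∑ j, F j * (Fintype.card ι * D) := by gcongr with j; exacts [hF0 j, hcol _]
    _ = Fintype.card ι * (D * ∑ j, F j) := by rw [← sum_mul]; ring

theorem sum_prod_parent_le {w : ι → ι → ℝ} {D : ℝ} (hw0 : ∀ x y, 0 ≤ w x y) (hD : 0 ≤ D)
    (hcol : ∀ y, ∑ x, w x y ≤ Fintype.card ι * D) (p : V → V) (d : V → ℕ) (s : Finset V)
    (hp : ∀ v ∈ s, d (p v) < d v) :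
    ∑ i : V → ι, ∏ v ∈ s, w (i v) (i (p v)) ≤ Fintype.card ι ^ Fintype.card V * D ^ #s := by
  -- a vertex of maximal rank is no one's parent, so it is a leaf of what remains
  induction s using Finset.induction_on_max_value d with
  | empty => simp
  | insert a s has hmax ih =>
    have hpa : p a ≠ a := fun h => by have := hp a (mem_insert_self a s); rw [h] at this; omega
    have hF (i : V → ι) (x : ι) :
        ∏ v ∈ s, w (update i a x v) (update i a x (p v)) = ∏ v ∈ s, w (i v) (i (p v)) := by
      refine prod_congr rfl fun v hv => ?_
      have hpv : p v ≠ a := fun h => by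
        have := hp v (mem_insert_of_mem hv); have := hmax v hv; rw [h] at *; omega
      rw [update_of_ne (ne_of_mem_of_not_mem hv has), update_of_ne hpv]
    calc ∑ i : V → ι, ∏ v ∈ insert a s, w (i v) (i (p v))
        = ∑ i : V → ι, (∏ v ∈ s, w (i v) (i (p v))) * w (i a) (i (p a)) := by
          simp only [prod_insert has, mul_comm]
      _ ≤ D * ∑ i : V → ι, ∏ v ∈ s, w (i v) (i (p v)) :=
          sum_mul_le_of_update_eq hcol (fun i => prod_nonneg fun _ _ => hw0 _ _) hF hpa
      _ ≤ D * (Fintype.card ι ^ Fintype.card V * D ^ #s) := by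
          gcongr; exact ih fun v hv => hp v (mem_insert_of_mem hv)
      _ = Fintype.card ι ^ Fintype.card V * D ^ #(insert a s) := by
          rw [card_insert_of_notMem has]; ring

end LeafRemoval

theorem prod_le_pow_mul_prod_of_injective {κ α : Type*} [Fintype κ] [DecidableEq κ] [Fintype α]
    {f : κ → ℝ} {C : ℝ} (hf0 : ∀ k, 0 ≤ f k) (hfC : ∀ k, f k ≤ C) {g : α → κ}
    (hg : Injective g) :
    ∏ k, f k ≤ C ^ (Fintype.card κ - Fintype.card α) * ∏ a, f (g a) := by
  calc ∏ k, f k = (∏ k ∈ (univ.map ⟨g, hg⟩)ᶜ, f k) * ∏ a, f (g a) := by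
        rw [← prod_mul_prod_compl (univ.map ⟨g, hg⟩) f, prod_map, mul_comm]; rfl
    _ ≤ (∏ k ∈ (univ.map ⟨g, hg⟩)ᶜ, C) * ∏ a, f (g a) :=
        mul_le_mul_of_nonneg_right (prod_le_prod (fun k _ => hf0 k) fun k _ => hfC k)
          (prod_nonneg fun _ _ => hf0 _)
    _ = C ^ (Fintype.card κ - Fintype.card α) * ∏ a, f (g a) := by
        rw [prod_const, card_compl, card_map, card_univ]

theorem SimpleGraph.Connected.exists_adj_dist_lt {V : Type*} {G : SimpleGraph V}
    (hG : G.Connected) {r v : V} (hv : v ≠ r) : ∃ u, G.Adj v u ∧ G.dist u r < G.dist v r := by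
  obtain ⟨q, hq⟩ := hG.exists_walk_length_eq_dist v r
  cases q with
  | nil => exact absurd rfl hv
  | cons h q => exact ⟨_, h, by have := dist_le q; simp only [Walk.length_cons] at hq; omega⟩

theorem eq_of_parent_edge_eq {V : Type*} {p : V → V} {d : V → ℕ} {v v' : V}
    (hv : d (p v) < d v) (hv' : d (p v') < d v') (h : s(v, p v) = s(v', p v')) : v = v' := by
  rcases Sym2.eq_iff.1 h with ⟨h, -⟩ | ⟨h, h'⟩
  · exact h
  · rw [h'] at hv; rw [← h] at hv'; omega

theorem sum_abs_le_card_mul_sqrt {ι : Type*} [Fintype ι] (f : ι → ℝ) {B : ℝ}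
    (h : ∑ x, f x ^ 2 ≤ Fintype.card ι * B) : ∑ x, |f x| ≤ Fintype.card ι * √B := by
  have hsq : (∑ x, |f x|) ^ 2 ≤ Fintype.card ι ^ 2 * B := by
    calc (∑ x, |f x|) ^ 2 ≤ Fintype.card ι * ∑ x, |f x| ^ 2 := by
          simpa using sq_sum_le_card_mul_sum_sq (s := univ) (f := fun x => |f x|)
      _ ≤ Fintype.card ι ^ 2 * B := by simp only [sq_abs]; nlinarith [h]
  calc ∑ x, |f x| = √((∑ x, |f x|) ^ 2) :=
        (Real.sqrt_sq (sum_nonneg fun _ _ => abs_nonneg _)).symm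
    _ ≤ √(Fintype.card ι ^ 2 * B) := Real.sqrt_le_sqrt hsq
    _ = Fintype.card ι * √B := by rw [Real.sqrt_mul (by positivity), Real.sqrt_sq (by positivity)]

theorem sqrt_inv_pow_eq_rpow {x : ℝ} (hx : 0 ≤ x) (k : ℕ) : √x⁻¹ ^ k = x ^ (-((k : ℝ) / 2)) := by
  rw [Real.sqrt_eq_rpow, ← Real.rpow_natCast, ← Real.rpow_mul (inv_nonneg.2 hx),
    Real.inv_rpow hx, ← Real.rpow_neg hx]
  ring_nf

theorem sum_prod_le_of_connected {V ι κ : Type*} [Fintype V] [DecidableEq V] [Fintype ι]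
    [Fintype κ] [DecidableEq κ] (edges : κ → V × V)
    (hconn : (SimpleGraph.fromRel fun a b => ∃ k, edges k = (a, b)).Connected)
    {w : ι → ι → ℝ} {C D : ℝ} (hw0 : ∀ x y, 0 ≤ w x y) (hwC : ∀ x y, w x y ≤ C)
    (hsymm : ∀ x y, w x y = w y x) (hC : 0 ≤ C) (hD : 0 ≤ D)
    (hcol : ∀ y, ∑ x, w x y ≤ Fintype.card ι * D) :
    ∑ i : V → ι, ∏ k, w (i (edges k).1) (i (edges k).2) ≤
      C ^ (Fintype.card κ - (Fintype.card V - 1)) *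
        (Fintype.card ι ^ Fintype.card V * D ^ (Fintype.card V - 1)) := by
  obtain ⟨r⟩ := hconn.nonempty
  set G := SimpleGraph.fromRel fun a b => ∃ k, edges k = (a, b)
  have hparent (v : V) : ∃ u, v ≠ r → G.Adj v u ∧ G.dist u r < G.dist v r := by
    by_cases hv : v = r
    · exact ⟨v, fun h => (h hv).elim⟩
    · exact (hconn.exists_adj_dist_lt hv).imp fun _ hu _ => hu
  choose p hp using hparent
  have hedge (v : {v // v ≠ r}) : ∃ k, s((edges k).1, (edges k).2) = s(v.1, p v) := by
    obtain ⟨-, ⟨k, hk⟩ | ⟨k, hk⟩⟩ := (SimpleGraph.fromRel_adj _ _ _).1 (hp v v.2).1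
    exacts [⟨k, by rw [hk]⟩, ⟨k, by rw [hk, Sym2.eq_swap]⟩]
  choose k hk using hedge
  have hk_inj : Injective k := fun v v' h => Subtype.ext <|
    eq_of_parent_edge_eq (d := fun v => G.dist v r) (hp v v.2).2 (hp v' v'.2).2
      (by rw [← hk, ← hk, h])
  have hweight (i : V → ι) (v : {v // v ≠ r}) :
      w (i (edges (k v)).1) (i (edges (k v)).2) = w (i v) (i (p v)) := by
    rcases Sym2.eq_iff.1 (hk v) with ⟨h1, h2⟩ | ⟨h1, h2⟩
    · rw [h1, h2]
    · rw [h1, h2, hsymm]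
  have hcard : Fintype.card {v // v ≠ r} = Fintype.card V - 1 := Fintype.card_subtype_compl _
  calc ∑ i : V → ι, ∏ e, w (i (edges e).1) (i (edges e).2)
      ≤ ∑ i : V → ι, C ^ (Fintype.card κ - (Fintype.card V - 1)) *
          ∏ v ∈ univ.erase r, w (i v) (i (p v)) := by
        refine sum_le_sum fun i _ => ?_
        rw [prod_subtype (univ.erase r) (p := (· ≠ r)) (fun v => by simp), ← hcard]
        simp only [← hweight]
        exact prod_le_pow_mul_prod_of_injective (fun _ => hw0 _ _) (fun _ => hwC _ _) hk_inj
    _ = C ^ (Fintype.card κ - (Fintype.card V - 1)) *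
          ∑ i : V → ι, ∏ v ∈ univ.erase r, w (i v) (i (p v)) := (mul_sum ..).symm
    _ ≤ C ^ (Fintype.card κ - (Fintype.card V - 1)) *
          (Fintype.card ι ^ Fintype.card V * D ^ (Fintype.card V - 1)) := by
        gcongr
        simpa using sum_prod_parent_le hw0 hD hcol p (fun v => G.dist v r) (univ.erase r)
          fun v hv => (hp v (ne_of_mem_erase hv)).2

theorem sum_norm_apply_le_of_ward {n : ℕ} (hn : 0 < n) {η C : ℝ} (hη : 0 < η) (hC : 1 ≤ C)
    {A : Matrix (Fin n) (Fin n) ℂ} (hsym : ∀ a b, ‖A a b‖ = ‖A b a‖)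
    (hward : ∀ a : Fin n, (1 / (n : ℝ)) * ∑ b, ‖A a b‖ ^ 2 ≤ C / (n * η)) (c : Fin n) :
    ∑ x, ‖A x c‖ ≤ n * (C * √((n : ℝ) * η)⁻¹) := by
  have hsq : ∑ x, ‖A x c‖ ^ 2 ≤ Fintype.card (Fin n) * (C / (n * η)) := by
    have := hward c
    simp_rw [hsym _ c, Fintype.card_fin]
    rwa [one_div, inv_mul_le_iff₀ (by positivity)] at this
  calc ∑ x, ‖A x c‖ = ∑ x, |‖A x c‖| := by simp
    _ ≤ n * √(C / (n * η)) := by simpa using sum_abs_le_card_mul_sqrt _ hsq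
    _ ≤ n * (C * √((n : ℝ) * η)⁻¹) := by
      rw [div_eq_mul_inv, Real.sqrt_mul (by positivity)]
      gcongr
      exact Real.sqrt_le_self_iff.2 (Or.inr hC)

/-- Graph bound for resolvent sums: if `𝒢` is a connected graph on `m` vertices given by an
edge list of `E` edges (multi-edges and loops allowed), and `A` is an `n×n` complex matrix
with symmetric absolute values, entries bounded by `C ≥ 1`, and Ward-type bound
`(1/n) ∑_b |A_{ab}|² ≤ C/(nη)`, then
`(1/n^m) ∑_{i₁,…,i_m} ∏_{(a,b)∈𝒢} |A_{i_a i_b}| ≤ C^{E+m-1} (nη)^{-(m-1)/2}`. -/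
theorem graph_resolvent_bound (m n E : ℕ) (edges : Fin E → Fin m × Fin m)
    (hconn : (SimpleGraph.fromRel
      (fun a b => ∃ k : Fin E, edges k = (a, b))).Connected)
    (η C : ℝ) (hη : 0 < η) (hC : 1 ≤ C) (hn : 0 < n)
    (A : Matrix (Fin n) (Fin n) ℂ)
    (hsym : ∀ a b, ‖A a b‖ = ‖A b a‖)
    (hbd : ∀ a b, ‖A a b‖ ≤ C)
    (hward : ∀ a : Fin n, (1 / (n : ℝ)) * ∑ b, ‖A a b‖ ^ 2 ≤ C / (n * η)) :
    (1 / (n : ℝ) ^ m) * ∑ i : Fin m → Fin n, ∏ k : Fin E,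
        ‖A (i (edges k).1) (i (edges k).2)‖
      ≤ C ^ (E + m - 1) * ((n : ℝ) * η) ^ (-(((m : ℝ) - 1) / 2)) := by
  have hm : 0 < m := Fin.pos_iff_nonempty.2 hconn.nonempty
  have hnη : 0 < (n : ℝ) * η := by positivity
  set K := √((n : ℝ) * η)⁻¹
  have hcol (c : Fin n) : ∑ x, ‖A x c‖ ≤ Fintype.card (Fin n) * (C * K) := by
    rw [Fintype.card_fin]; exact sum_norm_apply_le_of_ward hn hη hC hsym hward c
  have hgraph := sum_prod_le_of_connected edges hconn (fun x y => norm_nonneg (A x y)) hbd hsym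
    (by positivity) (by positivity) hcol
  simp only [Fintype.card_fin] at hgraph
  calc (1 / (n : ℝ) ^ m) * ∑ i : Fin m → Fin n, ∏ k : Fin E,
        ‖A (i (edges k).1) (i (edges k).2)‖
      ≤ (1 / (n : ℝ) ^ m) * (C ^ (E - (m - 1)) * ((n : ℝ) ^ m * (C * K) ^ (m - 1))) := by
        gcongr
    _ = C ^ (E - (m - 1)) * C ^ (m - 1) * K ^ (m - 1) := by
        field_simp; ring
    _ ≤ C ^ (E + m - 1) * K ^ (m - 1) := by
        rw [← pow_add]; gcongr; omega
    _ = C ^ (E + m - 1) * ((n : ℝ) * η) ^ (-(((m : ℝ) - 1) / 2)) := by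
        rw [sqrt_inv_pow_eq_rpow hnη.le, Nat.cast_pred hm]
end
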